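/- Let γ be fixed with 63/64 < γ < 1, let θ₀ > 0 be fixed, let 0 < λ₀ < 1 be fixed, and let λ₁, λ₂, λ₃ be nonzero real numbers. Set ε = X^{(63-64γ)/52 + θ₀}, H = (log²X)/ε, and k = ⌊log X⌋. Suppose Θ : ℝ → ℂ satisfies |Θ(t)| ≤ (1/(π|t|)) · (k/(2π|t|ε/8))^k for all t ≠ 0. Then ∫_{|t| > H} |Θ(t)| · |S₁(λ₁ t)| · |S₁(λ₂ t)| · |S₂(λ₃ t)| dt ≪ 1. -/
import Mathlib


open scoped Classical
open MeasureTheory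

/-- The exponential sum `S_k(t) = ∑_{λ₀X < p^k ≤ X, p = ⌊n^{1/γ}⌋} p^{1-γ} e(tp^k) log p`
over Piatetski-Shapiro primes of type `γ`, for `k = 1, 2`. -/
noncomputable def Sk (γ lam₀ X : ℝ) (k : ℕ) (t : ℝ) : ℂ :=
  ∑ p ∈ Finset.Icc 1 (Nat.floor X),
    if Nat.Prime p ∧ lam₀ * X < (p : ℝ) ^ k ∧ (p : ℝ) ^ k ≤ X ∧
        (∃ n : ℕ, 0 < n ∧ p = Nat.floor ((n : ℝ) ^ (1/γ))) then
      (((p : ℝ) ^ (1 - γ) * Real.log p : ℝ) : ℂ) *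
        Complex.exp (2 * Real.pi * Complex.I * (t * (p : ℝ) ^ k))
    else 0

lemma Sk_norm_le (γ lam₀ X : ℝ) (k : ℕ) (t : ℝ) (hγ0 : 0 ≤ γ) (hX : 1 ≤ X) :
    ‖Sk γ lam₀ X k t‖ ≤ X ^ 3 := by
  have hX0 : (0:ℝ) ≤ X := by linarith
  have hterm : ∀ p ∈ Finset.Icc 1 (Nat.floor X),
      ‖if Nat.Prime p ∧ lam₀ * X < (p : ℝ) ^ k ∧ (p : ℝ) ^ k ≤ X ∧
        (∃ n : ℕ, 0 < n ∧ p = Nat.floor ((n : ℝ) ^ (1/γ))) then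
      (((p : ℝ) ^ (1 - γ) * Real.log p : ℝ) : ℂ) *
        Complex.exp (2 * Real.pi * Complex.I * (t * (p : ℝ) ^ k))
    else 0‖ ≤ X * X := by
    intro p hp
    simp only [Finset.mem_Icc] at hp
    have hp1 : (1:ℝ) ≤ (p:ℝ) := by exact_mod_cast hp.1
    have hpX : (p:ℝ) ≤ X := le_trans (by exact_mod_cast hp.2) (Nat.floor_le hX0)
    split_ifs with h
    · rw [norm_mul]
      have hexp : ‖Complex.exp (2 * Real.pi * Complex.I * (t * (p : ℝ) ^ k))‖ = 1 := by
        have : (2 * (Real.pi:ℂ) * Complex.I * ((t:ℂ) * ((p:ℝ):ℂ) ^ k))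
            = ((2 * Real.pi * (t * (p:ℝ) ^ k) : ℝ) : ℂ) * Complex.I := by
          push_cast; ring
        rw [this, Complex.norm_exp_ofReal_mul_I]
      rw [hexp, mul_one]
      have hlog0 : 0 ≤ Real.log p := Real.log_nonneg hp1
      have hrpow0 : 0 ≤ (p:ℝ) ^ (1 - γ) := Real.rpow_nonneg (by linarith) _
      have h1 : (p:ℝ) ^ (1 - γ) ≤ X := by
        calc (p:ℝ) ^ (1 - γ) ≤ (p:ℝ) ^ (1:ℝ) :=
              Real.rpow_le_rpow_of_exponent_le hp1 (by linarith)
        _ = (p:ℝ) := Real.rpow_one _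
        _ ≤ X := hpX
      have h2 : Real.log p ≤ X := by
        have := Real.log_le_sub_one_of_pos (by linarith : (0:ℝ) < (p:ℝ))
        linarith
      have : ‖(((p : ℝ) ^ (1 - γ) * Real.log p : ℝ) : ℂ)‖
          = (p : ℝ) ^ (1 - γ) * Real.log p := by
        rw [Complex.norm_real, Real.norm_eq_abs, abs_of_nonneg (mul_nonneg hrpow0 hlog0)]
      rw [this]
      exact mul_le_mul h1 h2 hlog0 hX0
    · simp [mul_nonneg hX0 hX0]
  calc ‖Sk γ lam₀ X k t‖ ≤ ∑ p ∈ Finset.Icc 1 (Nat.floor X), ‖if Nat.Prime p ∧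
        lam₀ * X < (p : ℝ) ^ k ∧ (p : ℝ) ^ k ≤ X ∧
        (∃ n : ℕ, 0 < n ∧ p = Nat.floor ((n : ℝ) ^ (1/γ))) then
      (((p : ℝ) ^ (1 - γ) * Real.log p : ℝ) : ℂ) *
        Complex.exp (2 * Real.pi * Complex.I * (t * (p : ℝ) ^ k))
    else 0‖ := norm_sum_le _ _
  _ ≤ ∑ _p ∈ Finset.Icc 1 (Nat.floor X), X * X := Finset.sum_le_sum hterm
  _ = ((Nat.floor X : ℝ)) * (X * X) := by
      rw [Finset.sum_const, Nat.card_Icc]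
      simp [nsmul_eq_mul]
  _ ≤ X * (X * X) := by
      have := Nat.floor_le hX0
      nlinarith [mul_nonneg hX0 hX0]
  _ = X ^ 3 := by ring

set_option maxHeartbeats 1000000 in
/-- If `|Θ(t)| ≤ (1/(π|t|)) (k/(2π|t|ε/8))^k` for `t ≠ 0`, where
`k = ⌊log X⌋`, `ε = X^{(63-64γ)/52+θ₀}` and `H = (log²X)/ε`, then
`∫_{|t| > H} |Θ(t)| |S₁(λ₁t)| |S₁(λ₂t)| |S₂(λ₃t)| dt ≪ 1`. -/
theorem Gamma3_bound (γ θ₀ lam₀ lam₁ lam₂ lam₃ : ℝ)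
    (hγ : 63/64 < γ) (hγ1 : γ < 1) (hθ₀ : 0 < θ₀)
    (h0 : 0 < lam₀) (h1 : lam₀ < 1)
    (hlam₁ : lam₁ ≠ 0) (hlam₂ : lam₂ ≠ 0) (hlam₃ : lam₃ ≠ 0) :
    ∃ C > 0, ∃ X₀ : ℝ, ∀ X ≥ X₀, ∀ Θ : ℝ → ℂ,
      (∀ t : ℝ, t ≠ 0 →
        ‖Θ t‖ ≤ 1 / (Real.pi * |t|) *
          ((Nat.floor (Real.log X) : ℝ) /
              (2 * Real.pi * |t| * X ^ ((63 - 64*γ)/52 + θ₀) / 8)) ^ (Nat.floor (Real.log X))) →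
      (∫ t in {t : ℝ | (Real.log X) ^ 2 / X ^ ((63 - 64*γ)/52 + θ₀) < |t|},
          ‖Θ t‖ * ‖Sk γ lam₀ X 1 (lam₁ * t)‖ * ‖Sk γ lam₀ X 1 (lam₂ * t)‖ *
            ‖Sk γ lam₀ X 2 (lam₃ * t)‖) ≤ C := by
  refine ⟨1, one_pos, Real.exp (Real.exp 20), fun X hX Θ hΘ => ?_⟩
  have hX0 : (0:ℝ) < X := lt_of_lt_of_le (Real.exp_pos _) hX
  have hX1 : (1:ℝ) ≤ X := le_trans (Real.one_le_exp (by positivity)) hX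
  set L := Real.log X with hLdef
  have hL : Real.exp 20 ≤ L := by
    have := Real.log_le_log (Real.exp_pos _) hX
    rwa [Real.log_exp] at this
  have hL21 : (21:ℝ) ≤ L := le_trans (by linarith [Real.add_one_le_exp (20:ℝ)]) hL
  have hL0 : (0:ℝ) < L := by linarith
  set ε := X ^ ((63 - 64*γ)/52 + θ₀) with hεdef
  have hε0 : 0 < ε := Real.rpow_pos_of_pos hX0 _
  set H := L ^ 2 / ε with hHdef
  have hH0 : 0 < H := by rw [hHdef]; exact div_pos (pow_pos hL0 2) hε0
  set k := Nat.floor L with hkdef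
  have hkL : (k:ℝ) ≤ L := Nat.floor_le hL0.le
  have hLk : L < (k:ℝ) + 1 := Nat.lt_floor_add_one L
  have hk1 : 1 ≤ (k:ℝ) := by
    have h : (1:ℕ) ≤ k := Nat.le_floor (by exact_mod_cast (by linarith : (1:ℝ) ≤ L))
    exact_mod_cast h
  have hk0 : (0:ℝ) < (k:ℝ) := by linarith
  have hπ : (2:ℝ) ≤ Real.pi := by linarith [Real.pi_gt_three]
  set a := (k:ℝ) / (2 * Real.pi * ε / 8) with hadef
  have ha0 : 0 ≤ a := by
    rw [hadef]
    exact div_nonneg (Nat.cast_nonneg k) (by nlinarith [mul_pos Real.pi_pos hε0])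
  set g : ℝ → ℝ := fun t => X^3 * X^3 * X^3 * (1 / (Real.pi * |t|) * (a / |t|)^k)
    with hgdef
  have hSeq : {t : ℝ | H < |t|} = Set.Iio (-H) ∪ Set.Ioi H := by
    ext t
    simp only [Set.mem_setOf_eq, Set.mem_union, Set.mem_Iio, Set.mem_Ioi, lt_abs]
    constructor
    · rintro (h | h)
      · right; exact h
      · left; linarith
    · rintro (h | h)
      · right; linarith
      · left; exact h
  rw [hSeq]
  set e : ℝ := -(k:ℝ) - 1 with hedef
  have he : e < -1 := by rw [hedef]; linarith
  set c := X^3*X^3*X^3 * (a^k / Real.pi) with hcdef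
  have hgc : Set.EqOn g (fun t => c * t ^ e) (Set.Ioi H) := by
    intro t ht
    simp only [Set.mem_Ioi] at ht
    have ht0 : 0 < t := lt_trans hH0 ht
    have hre : t ^ e = (t ^ (k+1) : ℝ)⁻¹ := by
      rw [show e = -((k+1 : ℕ):ℝ) by rw [hedef]; push_cast; ring, Real.rpow_neg ht0.le,
        Real.rpow_natCast]
    simp only [hgdef, hcdef, abs_of_pos ht0, hre, div_pow]
    field_simp
    ring
  have hIoi : IntegrableOn g (Set.Ioi H) :=
    MeasureTheory.IntegrableOn.congr_fun ((integrableOn_Ioi_rpow_of_lt he hH0).const_mul c)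
      (fun t ht => (hgc ht).symm) measurableSet_Ioi
  have hgneg : ∀ t, g (-t) = g t := by intro t; simp only [hgdef, abs_neg]
  have hmap : (volume : Measure ℝ).restrict (Set.Iio (-H))
      = ((volume : Measure ℝ).restrict (Set.Ioi H)).map Neg.neg := by
    conv_lhs => rw [← Measure.map_neg_eq_self (volume : Measure ℝ)]
    rw [measurableEmbedding_neg.restrict_map]
    have hpre : (Neg.neg ⁻¹' Set.Iio (-H) : Set ℝ) = Set.Ioi H := by
      ext t
      simp only [Set.mem_preimage, Set.mem_Iio, Set.mem_Ioi]
      constructor <;> intro h <;> linarith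
    rw [hpre]
  have hIio : IntegrableOn g (Set.Iio (-H)) := by
    rw [IntegrableOn, hmap, measurableEmbedding_neg.integrable_map_iff]
    rw [show (g ∘ Neg.neg) = g from funext hgneg]
    exact hIoi
  have hIioVal : ∫ t in Set.Iio (-H), g t = ∫ t in Set.Ioi H, g t := by
    rw [← MeasureTheory.integral_Iic_eq_integral_Iio, ← integral_comp_neg_Ioi]
    simp only [hgneg]
  have hIoiVal : ∫ t in Set.Ioi H, g t = c * ((H ^ k)⁻¹ / k) := by
    rw [setIntegral_congr_fun measurableSet_Ioi hgc, integral_const_mul,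
      integral_Ioi_rpow_of_lt he hH0]
    rw [show e + 1 = -(k:ℝ) by rw [hedef]; ring, Real.rpow_neg hH0.le, Real.rpow_natCast]
    rw [neg_div_neg_eq]
  clear_value L ε H k a g e c
  by_cases hF : IntegrableOn (fun t => ‖Θ t‖ * ‖Sk γ lam₀ X 1 (lam₁ * t)‖ *
      ‖Sk γ lam₀ X 1 (lam₂ * t)‖ * ‖Sk γ lam₀ X 2 (lam₃ * t)‖)
      (Set.Iio (-H) ∪ Set.Ioi H)
  swap
  · rw [MeasureTheory.integral_undef hF]; norm_num
  have hmeas : MeasurableSet (Set.Iio (-H) ∪ Set.Ioi H) :=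
    measurableSet_Iio.union measurableSet_Ioi
  have hpt : ∀ t ∈ Set.Iio (-H) ∪ Set.Ioi H,
      ‖Θ t‖ * ‖Sk γ lam₀ X 1 (lam₁ * t)‖ * ‖Sk γ lam₀ X 1 (lam₂ * t)‖ *
        ‖Sk γ lam₀ X 2 (lam₃ * t)‖ ≤ g t := by
    intro t ht
    have htH : H < |t| := by
      rcases ht with h | h
      · simp only [Set.mem_Iio] at h
        rw [abs_of_neg (by linarith)]
        linarith
      · simp only [Set.mem_Ioi] at h
        rw [abs_of_pos (by linarith)]
        linarith
    have ht0 : t ≠ 0 := by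
      intro h
      rw [h, abs_zero] at htH
      linarith
    have habs0 : 0 < |t| := lt_trans hH0 htH
    have hb := hΘ t ht0
    have hb0 : 0 ≤ 1 / (Real.pi * |t|) * ((k:ℝ) / (2 * Real.pi * |t| * ε / 8)) ^ k :=
      le_trans (norm_nonneg _) hb
    have hX3 : (0:ℝ) ≤ X ^ 3 := pow_nonneg hX0.le 3
    have hs1 := Sk_norm_le γ lam₀ X 1 (lam₁ * t) (by linarith) hX1
    have hs2 := Sk_norm_le γ lam₀ X 1 (lam₂ * t) (by linarith) hX1
    have hs3 := Sk_norm_le γ lam₀ X 2 (lam₃ * t) (by linarith) hX1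
    have hbase : (k:ℝ) / (2 * Real.pi * |t| * ε / 8) = a / |t| := by
      rw [hadef, div_div]
      congr 1
      ring
    have hgt : g t = (1 / (Real.pi * |t|) * ((k:ℝ) / (2 * Real.pi * |t| * ε / 8)) ^ k)
        * X^3 * X^3 * X^3 := by
      rw [hbase]
      simp only [hgdef]
      ring
    rw [hgt]
    exact mul_le_mul (mul_le_mul (mul_le_mul hb hs1 (norm_nonneg _) hb0) hs2 (norm_nonneg _)
      (mul_nonneg hb0 hX3)) hs3 (norm_nonneg _) (mul_nonneg (mul_nonneg hb0 hX3) hX3)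
  have hdisj : Disjoint (Set.Iio (-H)) (Set.Ioi H) := by
    rw [Set.disjoint_left]
    intro t ht ht'
    simp only [Set.mem_Iio] at ht
    simp only [Set.mem_Ioi] at ht'
    linarith
  refine le_trans (setIntegral_mono_on hF (hIio.union hIoi) hmeas hpt) ?_
  rw [setIntegral_union hdisj measurableSet_Ioi hIio hIoi, hIioVal, hIoiVal]
  -- now: c * ((H^k)⁻¹/k) + c * ((H^k)⁻¹/k) ≤ 1
  have hHk : (0:ℝ) < H ^ k := pow_pos hH0 k
  have hAH : a / H ≤ 2 / L := by
    have hden : (0:ℝ) < 2*Real.pi*ε/8 := by linarith [mul_pos Real.pi_pos hε0]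
    rw [div_le_div_iff₀ hH0 hL0, hadef, hHdef, div_mul_eq_mul_div, div_le_iff₀ hden]
    rw [show 2 * (L^2/ε) * (2*Real.pi*ε/8) = Real.pi * L^2 / 2 by field_simp; ring]
    nlinarith
  have hAH0 : 0 ≤ a / H := div_nonneg ha0 hH0.le
  have hpowk : (a / H)^k ≤ (2 / L)^k := pow_le_pow_left₀ hAH0 hAH k
  have hexp9 : X^3*X^3*X^3 * (2/L)^k ≤ 1 := by
    have hXL : X = Real.exp L := by rw [hLdef]; exact (Real.exp_log hX0).symm
    have h2L0 : (0:ℝ) < 2 / L := div_pos two_pos hL0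
    have hXp : X^3*X^3*X^3 = Real.exp ((9:ℕ) * L) := by
      rw [hXL, Real.exp_nat_mul]
      ring
    have h2Lk : (2/L)^k = Real.exp ((k:ℕ) * Real.log (2/L)) := by
      rw [Real.exp_nat_mul, Real.exp_log h2L0]
    rw [hXp, h2Lk, ← Real.exp_add, Real.exp_le_one_iff]
    have hlogL : (20:ℝ) ≤ Real.log L := by
      rw [← Real.log_exp (20:ℝ)]
      exact Real.log_le_log (Real.exp_pos _) hL
    have hlog2 : Real.log 2 ≤ 1 := by
      have := Real.log_le_sub_one_of_pos (by norm_num : (0:ℝ) < 2)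
      linarith
    rw [Real.log_div (by norm_num) hL0.ne']
    have hkk : L - 1 ≤ (k:ℝ) := by linarith
    have h19 : (19:ℝ) ≤ Real.log L - Real.log 2 := by linarith
    have hmm : (L - 1) * 19 ≤ (k:ℝ) * (Real.log L - Real.log 2) :=
      mul_le_mul hkk h19 (by norm_num) (by linarith)
    push_cast
    nlinarith
  have hfin : c * ((H ^ k)⁻¹ / k) + c * ((H ^ k)⁻¹ / k)
      = (2 / (Real.pi * k)) * ((X^3*X^3*X^3) * (a/H)^k) := by
    rw [hcdef, div_pow]
    field_simp [Real.pi_ne_zero, hk0.ne', hHk.ne']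
    ring
  rw [hfin]
  have h2πk : 2 / (Real.pi * k) ≤ 1 := by
    rw [div_le_one (mul_pos Real.pi_pos hk0)]
    nlinarith
  have hX9 : (0:ℝ) ≤ X^3*X^3*X^3 := by
    have := pow_nonneg hX0.le 3
    nlinarith
  have hmid0 : 0 ≤ (X^3*X^3*X^3) * (a/H)^k := mul_nonneg hX9 (pow_nonneg hAH0 k)
  have hmid : (X^3*X^3*X^3) * (a/H)^k ≤ 1 := by
    calc (X^3*X^3*X^3) * (a/H)^k ≤ (X^3*X^3*X^3) * (2/L)^k :=
          mul_le_mul_of_nonneg_left hpowk hX9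
      _ ≤ 1 := hexp9
  calc (2 / (Real.pi * k)) * ((X^3*X^3*X^3) * (a/H)^k) ≤ 1 * 1 :=
        mul_le_mul h2πk hmid hmid0 (by norm_num)
    _ = 1 := by norm_num
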